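/- arXiv:2308.12165 — 2 statements merged into one kernel-verified Lean document; each statement's English description precedes it below -/
import Mathlib

section
/- Let ([m],v,e) and ([n],w,f) be attributed simple graphs. Adjoin an auxiliary point x_* to X with d_X(x,x_*)^p = d_X(x_*,x)^p = C^p for all x ∈ X (and d_X(x_*,x_*) = 0), and enlarge both graphs to size m+n by setting v_i = x_* for m+1 ≤ i ≤ m+n and e_{ii'} = y₀ whenever max{i,i'} ≥ m+1, and analogously w_j = x_* for n+1 ≤ j ≤ m+n and f_{jj'} = y₀ whenever max{j,j'} ≥ n+1. Then d_{G,A}(([m],v,e),([n],w,f)) = min over π ∈ S_{m+n} of [Σ_{i∈[m+n]} d_X(v_i,w_{π(i)})^p + ½·Σ_{(i,i')∈[m+n]²} d_Y(e_{ii'},f_{π(i)π(i')})^p]^{1/p}. -/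
open Finset

section GraphMetricDefs

variable {X Y : Type*}

/-- Two attributed graphs `([m],v,e)` and `([n],w,f)` are equal (i.e. agree up to
relabeling of the vertices). -/
def GraphEqual {m n : ℕ} (v : Fin m → X) (e : Fin m → Fin m → Y)
    (w : Fin n → X) (f : Fin n → Fin n → Y) : Prop :=
  ∃ h : m = n, ∃ π : Equiv.Perm (Fin n),
    (∀ i : Fin m, v i = w (π (Fin.cast h i))) ∧
    (∀ i i' : Fin m, e i i' = f (π (Fin.cast h i)) (π (Fin.cast h i')))

/-- `e` is a valid edge-attribute map: symmetric with no-edge value `y₀` on the diagonal. -/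
def IsGraph {m : ℕ} (y₀ : Y) (e : Fin m → Fin m → Y) : Prop :=
  (∀ i i', e i i' = e i' i) ∧ ∀ i, e i i = y₀

variable [PseudoMetricSpace X] [PseudoMetricSpace Y]

/-- The expression in brackets (raised to power `1/p`) in the definition of the GTT
distance, for a given subset `I ⊆ [m]` and a permutation `π ∈ S_n`. -/
noncomputable def gttVal (y₀ : Y) (p C : ℝ) {m n : ℕ} (hmn : m ≤ n)
    (v : Fin m → X) (e : Fin m → Fin m → Y)
    (w : Fin n → X) (f : Fin n → Fin n → Y)
    (I : Finset (Fin m)) (π : Equiv.Perm (Fin n)) : ℝ :=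
  (((m : ℝ) + (n : ℝ) - 2 * (I.card : ℝ)) * C ^ p
    + ∑ i ∈ I, dist (v i) (w (π (Fin.castLE hmn i))) ^ p
    + (1/2) * ∑ i ∈ I, ∑ i' ∈ I,
        dist (e i i') (f (π (Fin.castLE hmn i)) (π (Fin.castLE hmn i'))) ^ p
    + (1/2) * ∑ q ∈ ((univ : Finset (Fin m × Fin m)) \ I ×ˢ I),
        dist (e q.1 q.2) y₀ ^ p
    + (1/2) * ∑ q ∈ ((univ : Finset (Fin n × Fin n)) \
        ((I.image fun i => π (Fin.castLE hmn i)) ×ˢ (I.image fun i => π (Fin.castLE hmn i)))),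
        dist y₀ (f q.1 q.2) ^ p) ^ (1/p)

/-- The graph transport-transform (GTT) distance of order `p` with vertex penalty `C`
between `([m],v,e)` and `([n],w,f)`, for `m ≤ n`. -/
noncomputable def dGTT (y₀ : Y) (p C : ℝ) {m n : ℕ} (hmn : m ≤ n)
    (v : Fin m → X) (e : Fin m → Fin m → Y)
    (w : Fin n → X) (f : Fin n → Fin n → Y) : ℝ :=
  Finset.inf' Finset.univ Finset.univ_nonempty
    fun Iπ : Finset (Fin m) × Equiv.Perm (Fin n) => gttVal y₀ p C hmn v e w f Iπ.1 Iπ.2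

/-- The GTT distance between two graphs of arbitrary sizes (extended by symmetry). -/
noncomputable def dGTT' (y₀ : Y) (p C : ℝ) {m n : ℕ}
    (v : Fin m → X) (e : Fin m → Fin m → Y)
    (w : Fin n → X) (f : Fin n → Fin n → Y) : ℝ :=
  if h : m ≤ n then dGTT y₀ p C h v e w f else dGTT y₀ p C (not_le.mp h).le w f v e

/-- The GOSPA1 distance of order `p` with penalties `C₁` (vertex) and `CY` (edge bound)
between `([m],v,e)` and `([n],w,f)`, for `m ≤ n`. -/
noncomputable def dGOSPA1 (p C₁ CY : ℝ) {m n : ℕ} (hmn : m ≤ n)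
    (v : Fin m → X) (e : Fin m → Fin m → Y)
    (w : Fin n → X) (f : Fin n → Fin n → Y) : ℝ :=
  ((n : ℝ) ^ (1/p))⁻¹ *
    Finset.inf' Finset.univ Finset.univ_nonempty fun π : Equiv.Perm (Fin n) =>
      (((n : ℝ) - (m : ℝ)) * C₁ ^ p
        + ∑ i : Fin m, dist (v i) (w (π (Fin.castLE hmn i))) ^ p
        + (1/2) * ((n : ℝ) - 1)⁻¹ *
            ∑ i : Fin m, ((∑ i' : Fin m,
                dist (e i i') (f (π (Fin.castLE hmn i)) (π (Fin.castLE hmn i'))) ^ p)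
              + ((n : ℝ) - (m : ℝ)) * CY ^ p)) ^ (1/p)

/-- The GOSPA1 distance between two graphs of arbitrary sizes (extended by symmetry). -/
noncomputable def dGOSPA1' (p C₁ CY : ℝ) {m n : ℕ}
    (v : Fin m → X) (e : Fin m → Fin m → Y)
    (w : Fin n → X) (f : Fin n → Fin n → Y) : ℝ :=
  if h : m ≤ n then dGOSPA1 p C₁ CY h v e w f
  else dGOSPA1 p C₁ CY (not_le.mp h).le w f v e

/-- The GOSPA2 distance of order `p` with penalty `C₂`
between `([m],v,e)` and `([n],w,f)`, for `m ≤ n`. -/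
noncomputable def dGOSPA2 (y₀ : Y) (p C₂ : ℝ) {m n : ℕ} (hmn : m ≤ n)
    (v : Fin m → X) (e : Fin m → Fin m → Y)
    (w : Fin n → X) (f : Fin n → Fin n → Y) : ℝ :=
  ((n : ℝ) ^ (1/p))⁻¹ *
    Finset.inf' Finset.univ Finset.univ_nonempty fun π : Equiv.Perm (Fin n) =>
      (((n : ℝ) - (m : ℝ)) * C₂ ^ p
        + ∑ i : Fin m, dist (v i) (w (π (Fin.castLE hmn i))) ^ p
        + (1/2) * ((n : ℝ) - 1)⁻¹ *
            ∑ i : Fin n, ∑ i' : Fin n,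
              (if h : (i : ℕ) < m ∧ (i' : ℕ) < m
               then dist (e ⟨i.1, h.1⟩ ⟨i'.1, h.2⟩) (f (π i) (π i')) ^ p
               else dist y₀ (f (π i) (π i')) ^ p)) ^ (1/p)

/-- The GOSPA2 distance between two graphs of arbitrary sizes (extended by symmetry). -/
noncomputable def dGOSPA2' (y₀ : Y) (p C₂ : ℝ) {m n : ℕ}
    (v : Fin m → X) (e : Fin m → Fin m → Y)
    (w : Fin n → X) (f : Fin n → Fin n → Y) : ℝ :=
  if h : m ≤ n then dGOSPA2 y₀ p C₂ h v e w f
  else dGOSPA2 y₀ p C₂ (not_le.mp h).le w f v e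

end GraphMetricDefs

/-!
A permutation `π` of the filled-up vertex set sends each real vertex of the first graph either
to a real vertex of the second graph or to an auxiliary one; the real-to-real part is a subset
`I ⊆ [m]` with an injection `I → [n]`, which extends to some `σ ∈ S_n`. Every vertex, and every
pair of vertices, outside this matched part has an auxiliary endpoint on at least one side, where
the attribute is `x_*` (resp. `y₀`); as `d(x_*, x_*) = d(y₀, y₀) = 0`, its cost is the distance
of the other side to `x_*` (resp. `y₀`). Summing, the cost of `π` is the GTT cost of `(I, σ)`.
Conversely every `(I, σ)` arises in this way, so the two minima agree.
-/

section FillUp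

variable {Z A B W : Type*}

def IsFillUp (φ : A ↪ W) (z : Z) (u : A → Z) (u' : W → Z) : Prop :=
  (∀ a, u' (φ a) = u a) ∧ ∀ x ∉ Set.range φ, u' x = z

variable [PseudoMetricSpace Z] {p : ℝ}

theorem sum_dist_rpow_split {ι : Type*} [Fintype ι] [DecidableEq ι] (hp : p ≠ 0) (z : Z)
    (a b : ι → Z) (s : Finset ι) (h : ∀ i ∉ s, a i = z ∨ b i = z) :
    ∑ i, dist (a i) (b i) ^ p =
      ∑ i ∈ s, dist (a i) (b i) ^ p + ∑ i ∈ sᶜ, dist (a i) z ^ p + ∑ i ∈ sᶜ, dist z (b i) ^ p := by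
  rw [← sum_add_sum_compl s, add_assoc, ← sum_add_distrib]
  congr 1
  refine sum_congr rfl fun i hi => ?_
  rcases h i (mem_compl.1 hi) with h | h <;> simp [h, Real.zero_rpow hp]

theorem sum_compl_map_of_eq_zero {M : Type*} [AddCommMonoid M] [Fintype A] [Fintype W]
    [DecidableEq A] [DecidableEq W] (φ : A ↪ W) (h : W → M)
    (hh : ∀ x ∉ Set.range φ, h x = 0) (I : Finset A) :
    ∑ x ∈ (I.map φ)ᶜ, h x = ∑ a ∈ Iᶜ, h (φ a) := by
  rw [← sum_map Iᶜ φ]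
  refine (sum_subset (fun x hx => ?_) fun x _ hx => hh x ?_).symm
  · obtain ⟨a, ha, rfl⟩ := mem_map.1 hx
    simpa using ha
  · rintro ⟨a, rfl⟩
    simp_all

theorem sum_dist_rpow_fillUp [Fintype A] [Fintype B] [Fintype W] [DecidableEq A]
    [DecidableEq B] [DecidableEq W] (hp : p ≠ 0) {z : Z} {φ : A ↪ W} {ψ : B ↪ W}
    {u : A → Z} {v : B → Z} {u' v' : W → Z} (hu : IsFillUp φ z u u') (hv : IsFillUp ψ z v v')
    (π : Equiv.Perm W) (I : Finset A) (g : A → B) (hg : ∀ a ∈ I, π (φ a) = ψ (g a))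
    (hI : ∀ a, π (φ a) ∈ Set.range ψ → a ∈ I) :
    ∑ x, dist (u' x) (v' (π x)) ^ p =
      ∑ a ∈ I, dist (u a) (v (g a)) ^ p + ∑ a ∈ Iᶜ, dist (u a) z ^ p
        + ∑ b ∈ (I.image g)ᶜ, dist z (v b) ^ p := by
  have hzero : dist z z ^ p = 0 := by simp [Real.zero_rpow hp]
  have hmatched : (I.map φ).map π.toEmbedding = (I.image g).map ψ := by
    ext y
    simp only [mem_map, mem_image, Equiv.coe_toEmbedding]
    constructor
    · rintro ⟨_, ⟨a, ha, rfl⟩, rfl⟩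
      exact ⟨g a, ⟨a, ha, rfl⟩, (hg a ha).symm⟩
    · rintro ⟨_, ⟨a, ha, rfl⟩, rfl⟩
      exact ⟨φ a, ⟨a, ha, rfl⟩, hg a ha⟩
  have hunmatched : ∀ x ∉ I.map φ, u' x = z ∨ v' (π x) = z := by
    intro x hx
    by_cases hxφ : x ∈ Set.range φ
    · obtain ⟨a, rfl⟩ := hxφ
      exact Or.inr (hv.2 _ fun h => hx (mem_map_of_mem φ (hI a h)))
    · exact Or.inl (hu.2 x hxφ)
  rw [sum_dist_rpow_split hp z _ _ (I.map φ) hunmatched, sum_map]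
  congr 2
  · refine sum_congr rfl fun a ha => ?_
    rw [hu.1, hg a ha, hv.1]
  · rw [sum_compl_map_of_eq_zero φ _ (fun x hx => by rw [hu.2 x hx, hzero])]
    simp only [hu.1]
  · simp_rw [← hv.1]
    rw [← sum_compl_map_of_eq_zero ψ (fun y => dist z (v' y) ^ p)
      (fun y hy => by rw [hv.2 y hy, hzero]), ← hmatched]
    exact sum_equiv π (fun x => by simp) fun x _ => rfl

end FillUp

section Permutations

variable {A B W : Type*} [Finite A]

theorem exists_perm_comp_eq_of_mem_range (φ : A ↪ W) (ψ : B ↪ W) (χ : A ↪ B)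
    (π : Equiv.Perm W) :
    ∃ σ : Equiv.Perm B, ∀ a, π (φ a) ∈ Set.range ψ → π (φ a) = ψ (σ (χ a)) := by
  obtain ⟨σ, hσ⟩ := Equiv.Perm.exists_extending_pair
    (fun a : {a // π (φ a) ∈ Set.range ψ} => χ a) (fun a => a.2.choose)
    (χ.injective.comp Subtype.val_injective) fun a b hab => by
      apply Subtype.ext
      apply φ.injective
      apply π.injective
      rw [← a.2.choose_spec, ← b.2.choose_spec]
      exact congrArg ψ hab
  exact ⟨σ, fun a ha => by rw [hσ ⟨a, ha⟩]; exact ha.choose_spec.symm⟩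

theorem exists_perm_eqOn_of_injOn (φ : A ↪ W) (ψ : B ↪ W) (κ : A ↪ W)
    (hκ : ∀ a b, κ a ≠ ψ b) (I : Finset A) (g : A → B) (hg : Set.InjOn g I) :
    ∃ π : Equiv.Perm W, (∀ a ∈ I, π (φ a) = ψ (g a)) ∧ ∀ a, π (φ a) ∈ Set.range ψ → a ∈ I := by
  classical
  let h a := if a ∈ I then ψ (g a) else κ a
  have h_inj : Function.Injective h := by
    intro a b hab
    by_cases ha : a ∈ I <;> by_cases hb : b ∈ I <;> simp only [h, ha, hb, if_true, if_false] at hab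
    · exact hg ha hb (ψ.injective hab)
    · exact absurd hab.symm (hκ b (g a))
    · exact absurd hab (hκ a (g b))
    · exact κ.injective hab
  obtain ⟨π, hπ⟩ := Equiv.Perm.exists_extending_pair φ h φ.injective h_inj
  refine ⟨π, fun a ha => by simp [hπ, h, ha], fun a ⟨b, hb⟩ => ?_⟩
  by_contra ha
  simp only [hπ, h, ha, if_false] at hb
  exact hκ a b hb.symm

end Permutations

theorem isFillUp_castLE {Z : Type*} {m N : ℕ} (h : m ≤ N) {z : Z} {u : Fin m → Z}
    {u' : Fin N → Z} (hu : ∀ i : Fin N, u' i = if hi : (i : ℕ) < m then u ⟨i, hi⟩ else z) :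
    IsFillUp (Fin.castLEEmb h) z u u' := by
  refine ⟨fun a => by simp [hu], fun x hx => ?_⟩
  rw [hu, dif_neg]
  simpa [Fin.range_castLE] using hx

theorem isFillUp_castLE_prod {Z : Type*} {m N : ℕ} (h : m ≤ N) {z : Z}
    {u : Fin m → Fin m → Z} {u' : Fin N → Fin N → Z}
    (hu : ∀ i i' : Fin N, u' i i' =
      if hi : (i : ℕ) < m ∧ (i' : ℕ) < m then u ⟨i, hi.1⟩ ⟨i', hi.2⟩ else z) :
    IsFillUp ((Fin.castLEEmb h).prodMap (Fin.castLEEmb h)) z (Function.uncurry u)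
      (Function.uncurry u') := by
  refine ⟨fun a => by simp [Function.uncurry, hu], fun x hx => ?_⟩
  rw [Function.uncurry_apply_pair, hu, dif_neg]
  simpa [Set.range_prodMap, Fin.range_castLE] using hx

noncomputable def matchingCost {X' Y : Type*} [PseudoMetricSpace X'] [PseudoMetricSpace Y]
    (p : ℝ) {N : ℕ} (v' : Fin N → X') (e' : Fin N → Fin N → Y) (w' : Fin N → X')
    (f' : Fin N → Fin N → Y) (π : Equiv.Perm (Fin N)) : ℝ :=
  ((∑ i, dist (v' i) (w' (π i)) ^ p)
    + (1/2) * ∑ i, ∑ i', dist (e' i i') (f' (π i) (π i')) ^ p) ^ (1/p)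

theorem gttVal_eq_matchingCost {X X' Y : Type*} [PseudoMetricSpace X] [PseudoMetricSpace X']
    [PseudoMetricSpace Y] {y₀ : Y} {p C : ℝ} (hp : p ≠ 0) {m n : ℕ} (hmn : m ≤ n)
    {v : Fin m → X} {e : Fin m → Fin m → Y} {w : Fin n → X} {f : Fin n → Fin n → Y}
    {ιX : X → X'} (hιX : ∀ x x', dist (ιX x) (ιX x') = dist x x') {xstar : X'}
    (hxstar : ∀ x, dist (ιX x) xstar ^ p = C ^ p ∧ dist xstar (ιX x) ^ p = C ^ p)
    {v' w' : Fin (m + n) → X'} {e' f' : Fin (m + n) → Fin (m + n) → Y}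
    (hv : IsFillUp (Fin.castLEEmb (Nat.le_add_right m n)) xstar (ιX ∘ v) v')
    (hw : IsFillUp (Fin.castLEEmb (Nat.le_add_left n m)) xstar (ιX ∘ w) w')
    (he : IsFillUp ((Fin.castLEEmb (Nat.le_add_right m n)).prodMap
      (Fin.castLEEmb (Nat.le_add_right m n))) y₀ (Function.uncurry e) (Function.uncurry e'))
    (hf : IsFillUp ((Fin.castLEEmb (Nat.le_add_left n m)).prodMap
      (Fin.castLEEmb (Nat.le_add_left n m))) y₀ (Function.uncurry f) (Function.uncurry f'))
    ⦃π : Equiv.Perm (Fin (m + n))⦄ ⦃I : Finset (Fin m)⦄ ⦃σ : Equiv.Perm (Fin n)⦄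
    (hg : ∀ a ∈ I, π (Fin.castLE (Nat.le_add_right m n) a)
      = Fin.castLE (Nat.le_add_left n m) (σ (Fin.castLE hmn a)))
    (hI : ∀ a, π (Fin.castLE (Nat.le_add_right m n) a)
      ∈ Set.range (Fin.castLE (Nat.le_add_left n m)) → a ∈ I) :
    gttVal y₀ p C hmn v e w f I σ = matchingCost p v' e' w' f' π := by
  unfold gttVal matchingCost
  set g : Fin m → Fin n := fun a => σ (Fin.castLE hmn a)
  have hvertices := sum_dist_rpow_fillUp hp hv hw π I g hg hI
  have hedges := sum_dist_rpow_fillUp hp he hf (π.prodCongr π) (I ×ˢ I) (Prod.map g g)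
    (fun q hq => by
      rw [mem_product] at hq
      exact Prod.ext (hg _ hq.1) (hg _ hq.2))
    (fun q ⟨b, hb⟩ => by
      simp only [Function.Embedding.coe_prodMap, Prod.map, Equiv.prodCongr_apply,
        Prod.ext_iff] at hb
      exact mem_product.2 ⟨hI _ ⟨_, hb.1⟩, hI _ ⟨_, hb.2⟩⟩)
  have hcard : #(I.image g) = #I :=
    card_image_of_injective _ (σ.injective.comp (Fin.castLE_injective hmn))
  have hIm : #I ≤ m := by simpa using I.card_le_univ
  have hIn : #I ≤ n := by simpa [hcard] using (I.image g).card_le_univ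
  simp only [Function.comp_apply, hιX, (hxstar _).1, (hxstar _).2, sum_const, card_compl,
    Fintype.card_fin, hcard, nsmul_eq_mul, Nat.cast_sub hIm, Nat.cast_sub hIn] at hvertices
  simp only [Function.uncurry, Equiv.prodCongr_apply, Prod.map, sum_product,
    prodMap_image_product, compl_eq_univ_sdiff] at hedges
  rw [← Fintype.sum_prod_type', hvertices, hedges]
  congr 1
  ring

theorem dGTT_eq_fillup_matching_general
    {X X' Y : Type*} [PseudoMetricSpace X] [PseudoMetricSpace X'] [PseudoMetricSpace Y]
    (y₀ : Y) (p C : ℝ) (hp : 1 ≤ p)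
    {m n : ℕ} (hmn : m ≤ n)
    (v : Fin m → X) (e : Fin m → Fin m → Y)
    (w : Fin n → X) (f : Fin n → Fin n → Y)
    (ιX : X → X') (hιX : ∀ x x', dist (ιX x) (ιX x') = dist x x')
    (xstar : X')
    (hxstar : ∀ x, dist (ιX x) xstar ^ p = C ^ p ∧ dist xstar (ιX x) ^ p = C ^ p)
    (v' : Fin (m + n) → X')
    (hv' : ∀ i : Fin (m + n), v' i = if h : (i : ℕ) < m then ιX (v ⟨i.1, h⟩) else xstar)
    (e' : Fin (m + n) → Fin (m + n) → Y)
    (he' : ∀ i i' : Fin (m + n), e' i i' =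
      if h : (i : ℕ) < m ∧ (i' : ℕ) < m then e ⟨i.1, h.1⟩ ⟨i'.1, h.2⟩ else y₀)
    (w' : Fin (m + n) → X')
    (hw' : ∀ j : Fin (m + n), w' j = if h : (j : ℕ) < n then ιX (w ⟨j.1, h⟩) else xstar)
    (f' : Fin (m + n) → Fin (m + n) → Y)
    (hf' : ∀ j j' : Fin (m + n), f' j j' =
      if h : (j : ℕ) < n ∧ (j' : ℕ) < n then f ⟨j.1, h.1⟩ ⟨j'.1, h.2⟩ else y₀) :
    dGTT y₀ p C hmn v e w f =
      Finset.inf' Finset.univ Finset.univ_nonempty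
        fun π : Equiv.Perm (Fin (m + n)) =>
          ((∑ i : Fin (m + n), dist (v' i) (w' (π i)) ^ p)
            + (1/2) * ∑ i : Fin (m + n), ∑ i' : Fin (m + n),
                dist (e' i i') (f' (π i) (π i')) ^ p) ^ (1/p) := by
  have key := gttVal_eq_matchingCost (C := C) (v := v) (w := w) (zero_lt_one.trans_le hp).ne'
    hmn hιX hxstar (isFillUp_castLE _ hv') (isFillUp_castLE _ hw')
    (isFillUp_castLE_prod _ he') (isFillUp_castLE_prod _ hf')
  change _ = univ.inf' univ_nonempty (matchingCost p v' e' w' f')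
  apply le_antisymm
  · refine le_inf' _ _ fun π _ => ?_
    obtain ⟨σ, hσ⟩ := exists_perm_comp_eq_of_mem_range (Fin.castLEEmb (Nat.le_add_right m n))
      (Fin.castLEEmb (Nat.le_add_left n m)) (Fin.castLEEmb hmn) π
    let I := univ.filter fun a =>
      π (Fin.castLE (Nat.le_add_right m n) a) ∈ Set.range (Fin.castLE (Nat.le_add_left n m))
    exact (inf'_le _ (mem_univ (I, σ))).trans_eq
      (key (fun a ha => hσ a (mem_filter.1 ha).2) fun a ha => mem_filter.2 ⟨mem_univ a, ha⟩)
  · refine le_inf' _ _ fun ⟨I, σ⟩ _ => ?_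
    obtain ⟨π, hg, hI⟩ := exists_perm_eqOn_of_injOn (Fin.castLEEmb (Nat.le_add_right m n))
      (Fin.castLEEmb (Nat.le_add_left n m)) (Fin.addNatEmb n) (fun a b h => by
        have := congrArg Fin.val h
        simp only [Fin.addNatEmb_apply, Fin.val_addNat, Fin.castLEEmb_apply, Fin.val_castLE]
          at this
        omega) I _ (σ.injective.comp (Fin.castLE_injective hmn)).injOn
    exact (inf'_le _ (mem_univ π)).trans_eq (key hg hI).symm

/-- Proposition: GTT as optimal matching of graphs filled up to size `m+n`.
Adjoin an auxiliary point `x⋆` (in an extension `X'` of `X`) at distance-power `C^p` from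
every point of `X`, enlarge both graphs to size `m+n` by auxiliary isolated vertices; then
the GTT distance equals the minimum over permutations `π ∈ S_{m+n}` of the matching cost. -/
theorem dGTT_eq_fillup_matching
    {X X' Y : Type*} [PseudoMetricSpace X] [PseudoMetricSpace X'] [PseudoMetricSpace Y]
    (y₀ : Y) (p C : ℝ) (hp : 1 ≤ p) (hC : 0 < C)
    {m n : ℕ} (hmn : m ≤ n)
    (v : Fin m → X) (e : Fin m → Fin m → Y)
    (w : Fin n → X) (f : Fin n → Fin n → Y)
    (he : IsGraph y₀ e) (hf : IsGraph y₀ f)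
    (ιX : X → X') (hιX : ∀ x x', dist (ιX x) (ιX x') = dist x x')
    (xstar : X')
    (hxstar : ∀ x, dist (ιX x) xstar ^ p = C ^ p ∧ dist xstar (ιX x) ^ p = C ^ p)
    (v' : Fin (m + n) → X')
    (hv' : ∀ i : Fin (m + n), v' i = if h : (i : ℕ) < m then ιX (v ⟨i.1, h⟩) else xstar)
    (e' : Fin (m + n) → Fin (m + n) → Y)
    (he' : ∀ i i' : Fin (m + n), e' i i' =
      if h : (i : ℕ) < m ∧ (i' : ℕ) < m then e ⟨i.1, h.1⟩ ⟨i'.1, h.2⟩ else y₀)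
    (w' : Fin (m + n) → X')
    (hw' : ∀ j : Fin (m + n), w' j = if h : (j : ℕ) < n then ιX (w ⟨j.1, h⟩) else xstar)
    (f' : Fin (m + n) → Fin (m + n) → Y)
    (hf' : ∀ j j' : Fin (m + n), f' j j' =
      if h : (j : ℕ) < n ∧ (j' : ℕ) < n then f ⟨j.1, h.1⟩ ⟨j'.1, h.2⟩ else y₀) :
    dGTT y₀ p C hmn v e w f =
      Finset.inf' Finset.univ Finset.univ_nonempty
        fun π : Equiv.Perm (Fin (m + n)) =>
          ((∑ i : Fin (m + n), dist (v' i) (w' (π i)) ^ p)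
            + (1/2) * ∑ i : Fin (m + n), ∑ i' : Fin (m + n),
                dist (e' i i') (f' (π i) (π i')) ^ p) ^ (1/p) :=
  dGTT_eq_fillup_matching_general y₀ p C hp hmn v e w f ιX hιX xstar hxstar v' hv' e' he' w' hw' f'
    hf'
end

section
/- Let n ∈ ℕ, let E ∈ ℝ^{n×n} be a symmetric matrix, let L ∈ ℝ^{n×n} be a symmetric matrix with nonnegative entries and zero diagonal, and let c > 0. Assume there are no symmetries, i.e. there is no permutation π ∈ S_n other than the identity such that both L_{i,π(i)} = 0 for all i ∈ [n] and E_{ii'} = E_{π(i)π(i')} for all i,i' ∈ [n]. Let D ⊆ ℝ^{n×n} be the set of doubly stochastic matrices (entries in [0,1], all row sums and column sums equal to 1). Then the set of minimizers over D of the function D ↦ −c·tr(E D Eᵀ Dᵀ) + tr(L Dᵀ) is exactly {I}, where I is the identity matrix. -/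
/-! Writing `f = vec Eᵀ`, the quadratic term is `tr(E D Eᵀ Dᵀ) = f ⬝ᵥ (D ⊗ₖ D) *ᵥ f`, and for a
doubly stochastic `K` one has `∑ x y, K x y (f x - f y)² = 2 (f ⬝ᵥ f - f ⬝ᵥ K *ᵥ f)`. So the
quadratic term is at most `tr(E Eᵀ)`, its value at `D = 1`, while the linear term `tr(L Dᵀ)` is
nonnegative and vanishes at `1`. Hence `1` is a minimizer, and at any minimizer `D` both bounds are
tight. If `D ≠ 1`, Birkhoff's theorem yields a permutation `π ≠ 1` with `D i (π i) > 0` for all `i`;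
tightness then forces `L i (π i) = 0` and `E i i' = E (π i) (π i')`, i.e. a symmetry. -/

open Matrix Finset
open scoped Kronecker

section DoublyStochastic

variable {R α : Type*} [Fintype α] [DecidableEq α]

section OrderedSemiring

variable [CommSemiring R] [PartialOrder R] [IsOrderedRing R]

theorem kronecker_mem_doublyStochastic
    {β : Type*} [Fintype β] [DecidableEq β] {A : Matrix α α R} {B : Matrix β β R}
    (hA : A ∈ doublyStochastic R α) (hB : B ∈ doublyStochastic R β) :
    A ⊗ₖ B ∈ doublyStochastic R (α × β) := by
  rw [mem_doublyStochastic_iff_sum] at hA hB ⊢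
  refine ⟨fun x y => mul_nonneg (hA.1 _ _) (hB.1 _ _), fun x => ?_, fun y => ?_⟩
  · simp only [kroneckerMap_apply, Fintype.sum_prod_type, ← mul_sum, ← sum_mul, hA.2.1, hB.2.1,
      one_mul]
  · simp only [kroneckerMap_apply, Fintype.sum_prod_type, ← mul_sum, ← sum_mul, hA.2.2, hB.2.2,
      one_mul]

theorem mem_doublyStochastic_iff_le_one_and_sum {M : Matrix α α R} :
    M ∈ doublyStochastic R α ↔
      (∀ i j, 0 ≤ M i j ∧ M i j ≤ 1) ∧ (∀ i, ∑ j, M i j = 1) ∧ ∀ j, ∑ i, M i j = 1 := by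
  refine ⟨fun hM => ?_, fun ⟨h01, hrow, hcol⟩ => ?_⟩
  · obtain ⟨h0, hrow, hcol⟩ := mem_doublyStochastic_iff_sum.1 hM
    exact ⟨fun i j => ⟨h0 i j, le_one_of_mem_doublyStochastic hM⟩, hrow, hcol⟩
  · exact mem_doublyStochastic_iff_sum.2 ⟨fun i j => (h01 i j).1, hrow, hcol⟩

theorem le_sum_smul_permMatrix_apply {w : Equiv.Perm α → R} (hw : ∀ τ, 0 ≤ w τ)
    (σ : Equiv.Perm α) (i : α) : w σ ≤ (∑ τ, w τ • τ.permMatrix R) i (σ i) := by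
  rw [Matrix.sum_apply]
  calc w σ = (w σ • σ.permMatrix R) i (σ i) := by
        simp [Equiv.Perm.permMatrix, PEquiv.toMatrix_apply]
    _ ≤ ∑ τ, (w τ • τ.permMatrix R) i (σ i) :=
        single_le_sum (f := fun τ => (w τ • τ.permMatrix R) i (σ i))
          (fun τ _ => mul_nonneg (hw τ) (nonneg_of_mem_doublyStochastic
            permMatrix_mem_doublyStochastic)) (mem_univ σ)

end OrderedSemiring

section OrderedRing

variable [CommRing R] [LinearOrder R] [IsStrictOrderedRing R] {K : Matrix α α R}

theorem sum_mul_sub_sq_eq_of_mem_doublyStochastic (hK : K ∈ doublyStochastic R α) (f : α → R) :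
    ∑ x, ∑ y, K x y * (f x - f y) ^ 2 = 2 * (f ⬝ᵥ f - f ⬝ᵥ K *ᵥ f) := by
  have hrow : ∑ x, ∑ y, K x y * f x ^ 2 = f ⬝ᵥ f := by
    simp only [← sum_mul, sum_row_of_mem_doublyStochastic hK, one_mul, dotProduct, sq]
  have hcol : ∑ x, ∑ y, K x y * f y ^ 2 = f ⬝ᵥ f := by
    rw [sum_comm]
    simp only [← sum_mul, sum_col_of_mem_doublyStochastic hK, one_mul, dotProduct, sq]
  have hmid : ∑ x, ∑ y, K x y * (f x * f y) = f ⬝ᵥ K *ᵥ f := by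
    simp only [dotProduct, mulVec, mul_sum]
    exact sum_congr rfl fun x _ => sum_congr rfl fun y _ => by ring
  have hexp : ∀ x y, K x y * (f x - f y) ^ 2 =
      K x y * f x ^ 2 + K x y * f y ^ 2 - 2 * (K x y * (f x * f y)) := fun x y => by ring
  simp only [hexp, sum_sub_distrib, sum_add_distrib, ← mul_sum, hrow, hcol, hmid]
  ring

theorem dotProduct_mulVec_le_of_mem_doublyStochastic (hK : K ∈ doublyStochastic R α)
    (f : α → R) : f ⬝ᵥ K *ᵥ f ≤ f ⬝ᵥ f := by
  have h := sum_mul_sub_sq_eq_of_mem_doublyStochastic hK f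
  have : 0 ≤ ∑ x, ∑ y, K x y * (f x - f y) ^ 2 := sum_nonneg fun x _ => sum_nonneg fun y _ =>
    mul_nonneg (nonneg_of_mem_doublyStochastic hK) (sq_nonneg _)
  linarith

theorem eq_of_dotProduct_mulVec_eq_of_mem_doublyStochastic (hK : K ∈ doublyStochastic R α)
    {f : α → R} (hf : f ⬝ᵥ K *ᵥ f = f ⬝ᵥ f) {x y : α} (hxy : K x y ≠ 0) : f x = f y := by
  have hterm : ∀ x y, 0 ≤ K x y * (f x - f y) ^ 2 := fun x y =>
    mul_nonneg (nonneg_of_mem_doublyStochastic hK) (sq_nonneg _)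
  have hsum : ∑ x, ∑ y, K x y * (f x - f y) ^ 2 = 0 := by
    rw [sum_mul_sub_sq_eq_of_mem_doublyStochastic hK, hf, sub_self, mul_zero]
  rw [sum_eq_zero_iff_of_nonneg fun x _ => sum_nonneg fun y _ => hterm x y] at hsum
  have := (sum_eq_zero_iff_of_nonneg fun y _ => hterm x y).1 (hsum x (mem_univ x)) y (mem_univ y)
  simpa [hxy, sub_eq_zero] using this

end OrderedRing

section OrderedField

variable [Field R] [LinearOrder R] [IsStrictOrderedRing R]

theorem exists_perm_ne_one_apply_pos_of_mem_doublyStochastic {M : Matrix α α R}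
    (hM : M ∈ doublyStochastic R α) (hM1 : M ≠ 1) :
    ∃ σ : Equiv.Perm α, σ ≠ 1 ∧ ∀ i, 0 < M i (σ i) := by
  obtain ⟨w, hw0, hw1, rfl⟩ := exists_eq_sum_perm_of_mem_doublyStochastic hM
  obtain ⟨σ, hσ1, hσ⟩ : ∃ σ ≠ 1, w σ ≠ 0 := by
    by_contra! h
    have hw : w 1 = 1 := by rwa [Fintype.sum_eq_single 1 h] at hw1
    apply hM1
    rw [Fintype.sum_eq_single 1 fun σ hσ => by rw [h σ hσ, zero_smul], hw, one_smul,
      permMatrix_one]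
  exact ⟨σ, hσ1, fun i =>
    (lt_of_le_of_ne (hw0 σ) (Ne.symm hσ)).trans_le (le_sum_smul_permMatrix_apply hw0 σ i)⟩

end OrderedField

end DoublyStochastic

section Trace

variable {R ι : Type*} [Fintype ι]

theorem trace_mul_mul_transpose_mul_transpose_eq_vec [CommSemiring R] (E D : Matrix ι ι R) :
    trace (E * D * Eᵀ * Dᵀ) = vec Eᵀ ⬝ᵥ (D ⊗ₖ D) *ᵥ vec Eᵀ := by
  rw [kronecker_mulVec_vec, vec_dotProduct_vec, transpose_transpose, Matrix.mul_assoc,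
    Matrix.mul_assoc, Matrix.mul_assoc]

theorem trace_mul_transpose_nonneg [CommSemiring R] [PartialOrder R] [IsOrderedRing R]
    {A B : Matrix ι ι R} (hA : ∀ i j, 0 ≤ A i j) (hB : ∀ i j, 0 ≤ B i j) :
    0 ≤ trace (A * Bᵀ) := by
  rw [← sum_hadamard_eq]
  exact sum_nonneg fun i _ => sum_nonneg fun j _ => mul_nonneg (hA i j) (hB i j)

theorem hadamard_eq_zero_of_trace_mul_transpose_eq_zero [CommSemiring R] [PartialOrder R]
    [IsOrderedRing R] {A B : Matrix ι ι R} (hA : ∀ i j, 0 ≤ A i j) (hB : ∀ i j, 0 ≤ B i j)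
    (h : trace (A * Bᵀ) = 0) : A ⊙ B = 0 := by
  have hterm : ∀ i j, 0 ≤ (A ⊙ B) i j := fun i j => mul_nonneg (hA i j) (hB i j)
  rw [← sum_hadamard_eq, sum_eq_zero_iff_of_nonneg fun i _ => sum_nonneg fun j _ => hterm i j]
    at h
  ext i j
  exact (sum_eq_zero_iff_of_nonneg fun j _ => hterm i j).1 (h i (mem_univ i)) j (mem_univ j)

variable [DecidableEq ι] [CommRing R] [LinearOrder R] [IsStrictOrderedRing R]
  {D : Matrix ι ι R}

theorem trace_mul_mul_transpose_mul_transpose_le (E : Matrix ι ι R)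
    (hD : D ∈ doublyStochastic R ι) : trace (E * D * Eᵀ * Dᵀ) ≤ trace (E * Eᵀ) := by
  rw [trace_mul_mul_transpose_mul_transpose_eq_vec, ← transpose_transpose E, ← vec_dotProduct_vec,
    transpose_transpose]
  exact dotProduct_mulVec_le_of_mem_doublyStochastic (kronecker_mem_doublyStochastic hD hD) _

theorem apply_eq_of_trace_mul_mul_transpose_mul_transpose_eq {E : Matrix ι ι R}
    (hD : D ∈ doublyStochastic R ι) (h : trace (E * D * Eᵀ * Dᵀ) = trace (E * Eᵀ))
    {i j k l : ι} (hik : D i k ≠ 0) (hjl : D j l ≠ 0) : E i j = E k l := by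
  rw [trace_mul_mul_transpose_mul_transpose_eq_vec, ← transpose_transpose E,
    ← vec_dotProduct_vec, transpose_transpose] at h
  exact eq_of_dotProduct_mulVec_eq_of_mem_doublyStochastic (kronecker_mem_doublyStochastic hD hD)
    h (x := (i, j)) (y := (k, l)) (mul_ne_zero hik hjl)

end Trace

section FAQ

variable {R ι : Type*} [Fintype ι] [DecidableEq ι]

def faqObjective [Ring R] (c : R) (E L D : Matrix ι ι R) : R :=
  -c * trace (E * D * Eᵀ * Dᵀ) + trace (L * Dᵀ)

theorem faqObjective_one [Ring R] {c : R} {E L : Matrix ι ι R} (hLdiag : ∀ i, L i i = 0) :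
    faqObjective c E L 1 = -c * trace (E * Eᵀ) := by
  simp [faqObjective, trace, hLdiag]

variable [Field R] [LinearOrder R] [IsStrictOrderedRing R] {c : R} {E L D : Matrix ι ι R}

theorem faqObjective_one_le (hc : 0 ≤ c) (hL0 : ∀ i j, 0 ≤ L i j)
    (hLdiag : ∀ i, L i i = 0) (hD : D ∈ doublyStochastic R ι) :
    faqObjective c E L 1 ≤ faqObjective c E L D := by
  have hQ := trace_mul_mul_transpose_mul_transpose_le E hD
  have hT := trace_mul_transpose_nonneg (B := D) hL0 fun _ _ => nonneg_of_mem_doublyStochastic hD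
  rw [faqObjective_one hLdiag, faqObjective]
  nlinarith

theorem exists_perm_ne_one_of_faqObjective_le (hc : 0 < c) (hL0 : ∀ i j, 0 ≤ L i j)
    (hLdiag : ∀ i, L i i = 0) (hD : D ∈ doublyStochastic R ι) (hD1 : D ≠ 1)
    (h : faqObjective c E L D ≤ faqObjective c E L 1) :
    ∃ π : Equiv.Perm ι, π ≠ 1 ∧ (∀ i, L i (π i) = 0) ∧ ∀ i i', E i i' = E (π i) (π i') := by
  have hD0 : ∀ i j, 0 ≤ D i j := fun _ _ => nonneg_of_mem_doublyStochastic hD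
  have hQ := trace_mul_mul_transpose_mul_transpose_le E hD
  have hT := trace_mul_transpose_nonneg hL0 hD0
  rw [faqObjective_one hLdiag, faqObjective] at h
  have hQeq : trace (E * D * Eᵀ * Dᵀ) = trace (E * Eᵀ) := by nlinarith
  have hLD := hadamard_eq_zero_of_trace_mul_transpose_eq_zero hL0 hD0 (by nlinarith)
  obtain ⟨π, hπ1, hpos⟩ := exists_perm_ne_one_apply_pos_of_mem_doublyStochastic hD hD1
  refine ⟨π, hπ1, fun i => ?_, fun i i' =>
    apply_eq_of_trace_mul_mul_transpose_mul_transpose_eq hD hQeq (hpos i).ne' (hpos i').ne'⟩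
  exact (mul_eq_zero.1 (congr_fun₂ hLD i (π i))).resolve_right (hpos i).ne'

end FAQ

theorem faq_relaxed_unique_minimizer_general {n : ℕ} (c : ℝ) (hc : 0 < c)
    (E L : Matrix (Fin n) (Fin n) ℝ)
    (hL0 : ∀ i j, 0 ≤ L i j) (hLdiag : ∀ i, L i i = 0)
    (hNoSym : ¬ ∃ π : Equiv.Perm (Fin n), π ≠ 1 ∧
      (∀ i, L i (π i) = 0) ∧ ∀ i i', E i i' = E (π i) (π i')) :
    {D : Matrix (Fin n) (Fin n) ℝ |
      ((∀ i j, 0 ≤ D i j ∧ D i j ≤ 1) ∧ (∀ i, ∑ j, D i j = 1) ∧ (∀ j, ∑ i, D i j = 1)) ∧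
      ∀ D' : Matrix (Fin n) (Fin n) ℝ,
        ((∀ i j, 0 ≤ D' i j ∧ D' i j ≤ 1) ∧ (∀ i, ∑ j, D' i j = 1) ∧
          (∀ j, ∑ i, D' i j = 1)) →
        -c * Matrix.trace (E * D * Eᵀ * Dᵀ) + Matrix.trace (L * Dᵀ) ≤
          -c * Matrix.trace (E * D' * Eᵀ * D'ᵀ) + Matrix.trace (L * D'ᵀ)} = {1} := by
  ext D
  simp only [Set.mem_ofPred_eq, Set.mem_singleton_iff,
    ← mem_doublyStochastic_iff_le_one_and_sum]
  change (D ∈ doublyStochastic ℝ (Fin n) ∧ ∀ D' ∈ doublyStochastic ℝ (Fin n),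
    faqObjective c E L D ≤ faqObjective c E L D') ↔ D = 1
  constructor
  · rintro ⟨hD, hmin⟩
    by_contra hD1
    exact hNoSym (exists_perm_ne_one_of_faqObjective_le hc hL0 hLdiag hD hD1 (hmin 1 (one_mem _)))
  · rintro rfl
    exact ⟨one_mem _, fun D' hD' => faqObjective_one_le hc.le hL0 hLdiag hD'⟩

/-- Proposition: uniqueness of the relaxed FAQ minimizer. For a
symmetric matrix `E`, a symmetric nonnegative matrix `L` with zero diagonal, and `c > 0`,
if the graph has no symmetries (no nonidentity permutation `π` with `L i (π i) = 0` for
all `i` and `E i i' = E (π i) (π i')` for all `i, i'`), then the unique minimizer over the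
doubly stochastic matrices of `D ↦ −c·tr(E D Eᵀ Dᵀ) + tr(L Dᵀ)` is the identity matrix. -/
theorem faq_relaxed_unique_minimizer {n : ℕ} (c : ℝ) (hc : 0 < c)
    (E L : Matrix (Fin n) (Fin n) ℝ)
    (hE : E.IsSymm) (hL : L.IsSymm)
    (hL0 : ∀ i j, 0 ≤ L i j) (hLdiag : ∀ i, L i i = 0)
    (hNoSym : ¬ ∃ π : Equiv.Perm (Fin n), π ≠ 1 ∧
      (∀ i, L i (π i) = 0) ∧ ∀ i i', E i i' = E (π i) (π i')) :
    {D : Matrix (Fin n) (Fin n) ℝ |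
      ((∀ i j, 0 ≤ D i j ∧ D i j ≤ 1) ∧ (∀ i, ∑ j, D i j = 1) ∧ (∀ j, ∑ i, D i j = 1)) ∧
      ∀ D' : Matrix (Fin n) (Fin n) ℝ,
        ((∀ i j, 0 ≤ D' i j ∧ D' i j ≤ 1) ∧ (∀ i, ∑ j, D' i j = 1) ∧
          (∀ j, ∑ i, D' i j = 1)) →
        -c * Matrix.trace (E * D * Eᵀ * Dᵀ) + Matrix.trace (L * Dᵀ) ≤
          -c * Matrix.trace (E * D' * Eᵀ * D'ᵀ) + Matrix.trace (L * D'ᵀ)} = {1} :=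
  faq_relaxed_unique_minimizer_general c hc E L hL0 hLdiag hNoSym
end
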